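/- In the doubled star DS_n on n vertices, every leaf has expected distance cost exactly 2n - 3, and if a leaf additionally buys k single edges to k distinct other leaves (1 ≤ k ≤ n-2), its expected distance cost becomes 2n - 3 - k + k/(2(n-1)+k). -/

import Mathlib

open scoped BigOperators ENNReal

/-- A walk of length `n` between two vertices under step relation `r`. -/
def walkLen {V : Type*} (r : V → V → Prop) : ℕ → V → V → Prop
  | 0, u, v => u = v
  | (n+1), u, v => ∃ w, r u w ∧ walkLen r n w v

/-- Adjacency in a multigraph given by a multiset of (undirected) edges. -/
def mAdj {V : Type*} (m : Multiset (Sym2 V)) (u v : V) : Prop := s(u, v) ∈ m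

/-- Hop-count distance (possibly infinite) in a multigraph. -/
noncomputable def medist {V : Type*} (m : Multiset (Sym2 V)) (u v : V) : ℕ∞ :=
  sInf ((fun n : ℕ => (n : ℕ∞)) '' {n | walkLen (mAdj m) n u v})

/-- Expected distance cost of vertex `u` under uniform random deletion of one edge. -/
noncomputable def vCost {V : Type*} [DecidableEq V] [Fintype V]
    (m : Multiset (Sym2 V)) (u : V) : ℝ :=
  (Multiset.card m : ℝ)⁻¹ *
    (m.map (fun e => ∑ v : V, ((medist (m.erase e) u v).toNat : ℝ))).sum

/-- Total expected distance cost of a multigraph. -/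
noncomputable def tCost {V : Type*} [DecidableEq V] [Fintype V]
    (m : Multiset (Sym2 V)) : ℝ := ∑ u : V, vCost m u

/-!
Deleting one edge of the doubled star (plus bought edges) leaves the centre adjacent to every
other vertex, since its edges are doubled. Hence a leaf `l` is at distance `1` from its
neighbours and `2` from everything else, so its distance sum is `2(n - 1) - deg l`. Deleting one
of the `2(n - 1)` centre edges leaves `l` with `k + 1` neighbours, deleting one of the `k` bought
edges leaves it with `k`; averaging gives `2n - 3 - k + k / (2(n - 1) + k)`, and `k = 0` is the
plain doubled star.
-/

open Finset

section Distance

variable {V : Type*} {m : Multiset (Sym2 V)} {u v w : V}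

lemma mAdj_add {m₁ m₂ : Multiset (Sym2 V)} : mAdj (m₁ + m₂) u v ↔ mAdj m₁ u v ∨ mAdj m₂ u v :=
  Multiset.mem_add

lemma mAdj_comm : mAdj m u v ↔ mAdj m v u := by
  rw [mAdj, mAdj, Sym2.eq_swap]

lemma medist_le_of_walkLen {k : ℕ} (h : walkLen (mAdj m) k u v) : medist m u v ≤ k :=
  sInf_le ⟨k, h, rfl⟩

lemma le_medist_of_forall_walkLen {k : ℕ} (h : ∀ j, walkLen (mAdj m) j u v → k ≤ j) :
    (k : ℕ∞) ≤ medist m u v :=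
  le_sInf <| by rintro _ ⟨j, hj, rfl⟩; exact Nat.cast_le.mpr (h j hj)

lemma medist_self (m : Multiset (Sym2 V)) (u : V) : medist m u u = 0 :=
  nonpos_iff_eq_zero.mp (medist_le_of_walkLen (k := 0) rfl)

lemma medist_eq_one (h : u ≠ v) (huv : mAdj m u v) : medist m u v = 1 := by
  refine le_antisymm (medist_le_of_walkLen (k := 1) ⟨v, huv, rfl⟩)
    (le_medist_of_forall_walkLen fun j hj => ?_)
  rcases j with _ | j
  · exact absurd hj h
  · omega

lemma medist_eq_two (h : u ≠ v) (huv : ¬ mAdj m u v) (huw : mAdj m u w) (hwv : mAdj m w v) :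
    medist m u v = 2 := by
  refine le_antisymm (medist_le_of_walkLen (k := 2) ⟨w, huw, v, hwv, rfl⟩)
    (le_medist_of_forall_walkLen fun j hj => ?_)
  match j, hj with
  | 0, hj => exact absurd hj h
  | 1, ⟨x, hx, hxv⟩ => exact absurd (hxv ▸ hx) huv
  | j + 2, _ => exact Nat.le_add_left 2 j

variable [DecidableEq V]

instance : DecidableRel (mAdj m) := fun u v => inferInstanceAs (Decidable (s(u, v) ∈ m))

/-- `d(u, v)` is `0`, `1` or `2` according as `v = u`, `v` is a neighbour of `u`, or neither. -/
lemma medist_toNat_add_add_eq_two {c : V} (hc : ∀ v, v ≠ c → mAdj m c v) (u v : V) :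
    (medist m u v).toNat + (if v ≠ u ∧ mAdj m u v then 1 else 0) + (if v = u then 2 else 0) =
      2 := by
  by_cases hvu : v = u
  · simp [hvu, medist_self]
  by_cases huv : mAdj m u v
  · simp [hvu, huv, medist_eq_one (Ne.symm hvu) huv]
  have huc : u ≠ c := fun huc => huv (huc ▸ hc v (huc ▸ hvu))
  have hvc : v ≠ c := fun hvc => huv (hvc ▸ mAdj_comm.mp (hc u huc))
  simp [hvu, huv, medist_eq_two (Ne.symm hvu) huv (mAdj_comm.mp (hc u huc)) (hc v hvc)]

variable [Fintype V]

lemma sum_medist_toNat_add_card_neighbours {c : V} (hc : ∀ v, v ≠ c → mAdj m c v) (u : V) :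
    ∑ v, (medist m u v).toNat + #{v | v ≠ u ∧ mAdj m u v} + 2 = 2 * Fintype.card V := by
  have h := Finset.sum_congr rfl fun v (_ : v ∈ univ) => medist_toNat_add_add_eq_two hc u v
  rw [Finset.sum_add_distrib, Finset.sum_add_distrib, Finset.sum_ite_eq', ← Finset.card_filter,
    Finset.sum_const, smul_eq_mul] at h
  simpa [mul_comm] using h

end Distance

section Star

variable {V : Type*}

def starEdges (x : V) (T : Finset V) : Multiset (Sym2 V) := T.val.map fun y => s(x, y)

variable {x u v w : V} {T : Finset V}

lemma mem_of_mem_starEdges {e : Sym2 V} (he : e ∈ starEdges x T) : x ∈ e := by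
  obtain ⟨y, -, rfl⟩ := Multiset.mem_map.mp he
  exact Sym2.mem_mk_left x y

lemma mAdj_starEdges : mAdj (starEdges x T) u v ↔ (u = x ∧ v ∈ T) ∨ (v = x ∧ u ∈ T) := by
  simp only [mAdj, starEdges, Multiset.mem_map, Finset.mem_val, Sym2.eq_iff]
  aesop

lemma card_starEdges : Multiset.card (starEdges x T) = #T :=
  Multiset.card_map _ _

variable [DecidableEq V]

lemma count_starEdges :
    (starEdges x T).count s(u, v) = if (u = x ∧ v ∈ T) ∨ (v = x ∧ u ∈ T) then 1 else 0 := by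
  rw [starEdges, Multiset.count_eq_of_nodup (T.nodup.map fun _ _ => Sym2.congr_right.mp)]
  exact if_congr mAdj_starEdges rfl rfl

lemma starEdges_erase : (starEdges x T).erase s(x, w) = starEdges x (T.erase w) := by
  rw [starEdges, starEdges, Finset.erase_val,
    Multiset.map_erase _ (fun _ _ => Sym2.congr_right.mp)]

end Star

section DoubledStar

variable {V : Type*} [Fintype V] [DecidableEq V]

def doubledStar (c : V) : Multiset (Sym2 V) :=
  starEdges c (univ.erase c) + starEdges c (univ.erase c)

variable {c l : V} {S : Finset V} {m : Multiset (Sym2 V)}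

lemma eq_doubledStar_add_starEdges (hl : l ≠ c) (hcS : c ∉ S)
    (h2 : ∀ v, v ≠ c → m.count s(c, v) = 2) (hcc : m.count s(c, c) = 0)
    (h1 : ∀ v ∈ S, m.count s(l, v) = 1)
    (h0 : ∀ v w, v ≠ c → w ≠ c → ¬(v = l ∧ w ∈ S) → ¬(w = l ∧ v ∈ S) → m.count s(v, w) = 0) :
    m = doubledStar c + starEdges l S := by
  ext e
  induction e using Sym2.ind with
  | _ u v =>
  simp only [doubledStar, Multiset.count_add, count_starEdges, Finset.mem_erase, Finset.mem_univ,
    and_true]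
  by_cases hu : u = c <;> by_cases hv : v = c
  · subst hu hv; simp [hcc, hcS]
  · subst hu; simp [h2 v hv, hv, hl.symm, hcS]
  · subst hv; rw [Sym2.eq_swap]; simp [h2 u hu, hu, hl.symm, hcS]
  · by_cases hul : u = l ∧ v ∈ S
    · obtain ⟨rfl, hvS⟩ := hul; simp [h1 v hvS, hvS, hu, hv]
    by_cases hvl : v = l ∧ u ∈ S
    · obtain ⟨rfl, huS⟩ := hvl; rw [Sym2.eq_swap]; simp [h1 u huS, huS, hu, hv]
    · simp [h0 u v hu hv hul hvl, hu, hv, hul, hvl]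

/-- The extra edges `A` at `c` do not change the neighbourhood `insert c T` of `l`. -/
lemma sum_medist_toNat_starEdges {A : Multiset (Sym2 V)} {T : Finset V} (hl : l ≠ c)
    (hcT : c ∉ T) (hlT : l ∉ T) (hA : ∀ e ∈ A, c ∈ e) :
    ∑ v, ((medist (A + starEdges c (univ.erase c) + starEdges l T) l v).toNat : ℝ) =
      2 * Fintype.card V - 3 - #T := by
  set M := A + starEdges c (univ.erase c) + starEdges l T
  have hc : ∀ v, v ≠ c → mAdj M c v := fun v hv =>
    mAdj_add.mpr (Or.inl (mAdj_add.mpr (Or.inr (mAdj_starEdges.mpr (by simp [hv])))))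
  have hN : ({v | v ≠ l ∧ mAdj M l v} : Finset V) = insert c T := by
    ext v
    have hAv : mAdj A l v → v = c := fun h =>
      ((Sym2.mem_iff.mp (hA _ h)).resolve_left hl.symm).symm
    simp only [M, mAdj_add, mAdj_starEdges, Finset.mem_filter, Finset.mem_univ, true_and,
      Finset.mem_insert, Finset.mem_erase]
    aesop
  have h := sum_medist_toNat_add_card_neighbours hc l
  rw [hN, Finset.card_insert_of_notMem hcT] at h
  have h' : ((∑ v, (medist M l v).toNat : ℕ) : ℝ) + (#T + 1) + 2 = 2 * Fintype.card V := by
    exact_mod_cast h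
  push_cast at h'
  linarith

lemma vCost_doubledStar_add_starEdges (hl : l ≠ c) (hcS : c ∉ S) (hlS : l ∉ S) :
    vCost (doubledStar c + starEdges l S) l =
      2 * (Fintype.card V : ℝ) - 3 - #S + #S / (2 * ((Fintype.card V : ℝ) - 1) + #S) := by
  set X := starEdges c (univ.erase c)
  set Y := starEdges l S
  set D : Sym2 V → ℝ := fun e => ∑ v, ((medist ((X + X + Y).erase e) l v).toNat : ℝ)
  have hX : ∀ e ∈ X, D e = 2 * Fintype.card V - 3 - #S := fun e he => by
    simp only [D, Multiset.erase_add_left_pos _ (Multiset.mem_add.mpr (Or.inl he)),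
      Multiset.erase_add_left_pos _ he]
    exact sum_medist_toNat_starEdges hl hcS hlS
      fun e' he' => mem_of_mem_starEdges (Multiset.mem_of_mem_erase he')
  have hY : ∀ e ∈ Y, D e = 2 * Fintype.card V - 2 - #S := fun e he => by
    obtain ⟨w, hw, rfl⟩ := Multiset.mem_map.mp he
    simp only [D, Multiset.erase_add_right_pos _ he, Y, starEdges_erase]
    rw [sum_medist_toNat_starEdges hl (fun h => hcS (Finset.mem_of_mem_erase h))
      (fun h => hlS (Finset.mem_of_mem_erase h)) fun e' he' => mem_of_mem_starEdges he',
      ← Finset.card_erase_add_one hw]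
    push_cast
    ring
  have hcardX : #(univ.erase c) + 1 = Fintype.card V := Finset.card_erase_add_one (mem_univ c)
  have hpos : 0 < #(univ.erase c) := Finset.card_pos.mpr ⟨l, by simpa using hl⟩
  rw [vCost, doubledStar, Multiset.map_add, Multiset.map_add, Multiset.sum_add, Multiset.sum_add,
    Multiset.map_congr rfl hX, Multiset.map_congr rfl hY, Multiset.map_const', Multiset.map_const',
    Multiset.sum_replicate, Multiset.sum_replicate, Multiset.card_add, Multiset.card_add]
  simp only [X, Y, card_starEdges, nsmul_eq_mul, ← hcardX]
  generalize #(univ.erase c) = p at hpos ⊢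
  have hM : (p + p + #S : ℝ) ≠ 0 := by positivity
  push_cast
  rw [show 2 * ((p : ℝ) + 1 - 1) + #S = p + p + #S by ring]
  field_simp
  ring

end DoubledStar

theorem vCost_doubledStar_general {n : ℕ} (c : Fin n)
    (m : Multiset (Sym2 (Fin n)))
    (hm2 : ∀ v : Fin n, v ≠ c → m.count s(c, v) = 2)
    (hm0 : ∀ v w : Fin n, v ≠ c → w ≠ c → m.count s(v, w) = 0)
    (hmc : m.count s(c, c) = 0) :
    (∀ l : Fin n, l ≠ c → vCost m l = 2 * (n : ℝ) - 3) ∧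
    (∀ (l : Fin n) (k : ℕ) (S : Finset (Fin n)) (m' : Multiset (Sym2 (Fin n))),
      l ≠ c → c ∉ S → l ∉ S → S.card = k → 1 ≤ k → k ≤ n - 2 →
      (∀ v : Fin n, v ≠ c → m'.count s(c, v) = 2) →
      m'.count s(c, c) = 0 →
      (∀ v ∈ S, m'.count s(l, v) = 1) →
      (∀ v w : Fin n, v ≠ c → w ≠ c → ¬(v = l ∧ w ∈ S) → ¬(w = l ∧ v ∈ S) →
        m'.count s(v, w) = 0) →
      vCost m' l = 2 * (n : ℝ) - 3 - k + (k : ℝ) / (2 * ((n : ℝ) - 1) + k)) := by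
  refine ⟨fun l hl => ?_, fun l k S m' hl hcS hlS hSk _ _ h2 hcc h1 h0 => ?_⟩
  · have hm : m = doubledStar c + starEdges l ∅ :=
      eq_doubledStar_add_starEdges hl (Finset.notMem_empty c) hm2 hmc (by simp)
        fun v w hv hw _ _ => hm0 v w hv hw
    simpa [hm] using vCost_doubledStar_add_starEdges hl (Finset.notMem_empty c)
      (Finset.notMem_empty l)
  · rw [eq_doubledStar_add_starEdges hl hcS h2 hcc h1 h0,
      vCost_doubledStar_add_starEdges hl hcS hlS, Fintype.card_fin, hSk]

/-- In the doubled star `DS_n` (center `c` joined to each of the `n-1` leaves by two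
parallel edges), every leaf has expected distance cost exactly `2n - 3`; and if a leaf
`l` additionally buys `k` single edges to `k` distinct other leaves (`1 ≤ k ≤ n - 2`),
its expected distance cost becomes `2n - 3 - k + k/(2(n-1)+k)`. -/
theorem vCost_doubledStar {n : ℕ} (hn : 2 ≤ n) (c : Fin n)
    (m : Multiset (Sym2 (Fin n)))
    (hm2 : ∀ v : Fin n, v ≠ c → m.count s(c, v) = 2)
    (hm0 : ∀ v w : Fin n, v ≠ c → w ≠ c → m.count s(v, w) = 0)
    (hmc : m.count s(c, c) = 0) :
    (∀ l : Fin n, l ≠ c → vCost m l = 2 * (n : ℝ) - 3) ∧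
    (∀ (l : Fin n) (k : ℕ) (S : Finset (Fin n)) (m' : Multiset (Sym2 (Fin n))),
      l ≠ c → c ∉ S → l ∉ S → S.card = k → 1 ≤ k → k ≤ n - 2 →
      (∀ v : Fin n, v ≠ c → m'.count s(c, v) = 2) →
      m'.count s(c, c) = 0 →
      (∀ v ∈ S, m'.count s(l, v) = 1) →
      (∀ v w : Fin n, v ≠ c → w ≠ c → ¬(v = l ∧ w ∈ S) → ¬(w = l ∧ v ∈ S) →
        m'.count s(v, w) = 0) →
      vCost m' l = 2 * (n : ℝ) - 3 - k + (k : ℝ) / (2 * ((n : ℝ) - 1) + k)) :=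
  vCost_doubledStar_general c m hm2 hm0 hmc
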